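/- arXiv:2509.07055 — 7 statements merged into one kernel-verified Lean document; each statement's English description precedes it below -/
import Mathlib

section
/- Let 𝒳 be a measurable space, H a real Hilbert space, and φ : 𝒳 → H a strongly measurable map satisfying 0 ≤ ⟨φ(x), φ(y)⟩ ≤ 1 for all x, y ∈ 𝒳. Let ε ≥ 0, δ ∈ [0,1], and let P, Q be probability measures on 𝒳 that are (ε,δ)-indistinguishable, i.e., for every measurable set A ⊆ 𝒳 one has P(A) ≤ e^ε·Q(A) + δ and Q(A) ≤ e^ε·P(A) + δ. Then the distance between the mean embeddings satisfies ‖∫ φ dP − ∫ φ dQ‖ ≤ √2·(1 − 2(1−δ)/(1+e^ε)). -/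
open MeasureTheory
open scoped RealInnerProductSpace

/-!
Write `v = ∫ φ dP - ∫ φ dQ` and `g x = ⟪v, φ x⟫`, so that `‖v‖² = ∫ g dP - ∫ g dQ`.
Indistinguishability bounds the total variation, `P A - Q A ≤ t := 1 - 2(1-δ)/(1+e^ε)`,
and the kernel bounds give `‖φ x - φ y‖ ≤ √2`, so `g` oscillates by at most `√2 ‖v‖`.
By the layer-cake formula a function of oscillation `c` has integrals under `P` and `Q`
differing by at most `t c`; hence `‖v‖² ≤ √2 t ‖v‖`.
-/

section TotalVariation

variable {Ω : Type*} [MeasurableSpace Ω] {P Q : Measure Ω}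

/-- Adding the two indistinguishability inequalities for `A` and `Aᶜ` eliminates the
complements and leaves `(1 + e^ε) (P A - Q A) ≤ e^ε - 1 + 2δ`. -/
lemma measureReal_le_add_of_indistinguishable [IsProbabilityMeasure P] [IsProbabilityMeasure Q]
    {ε δ : ℝ} {A : Set Ω} (hA : MeasurableSet A)
    (hPQ : P.real A ≤ Real.exp ε * Q.real A + δ)
    (hQP : Q.real Aᶜ ≤ Real.exp ε * P.real Aᶜ + δ) :
    P.real A ≤ Q.real A + (1 - 2 * (1 - δ) / (1 + Real.exp ε)) := by
  have hE : 0 < 1 + Real.exp ε := by positivity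
  rw [probReal_compl_eq_one_sub hA, probReal_compl_eq_one_sub hA] at hQP
  rw [← sub_le_iff_le_add', one_sub_div hE.ne', le_div_iff₀ hE]
  linarith

lemma integral_sub_integral_le_mul_of_nonneg_of_le [IsFiniteMeasure P] [IsFiniteMeasure Q]
    {f : Ω → ℝ} (hf : Measurable f) {c t : ℝ} (hc : 0 ≤ c)
    (hf0 : ∀ x, 0 ≤ f x) (hfc : ∀ x, f x ≤ c)
    (hPQ : ∀ A, MeasurableSet A → P.real A ≤ Q.real A + t) :
    ∫ x, f x ∂P - ∫ x, f x ∂Q ≤ t * c := by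
  have hbound : ∀ x, ‖f x‖ ≤ c := fun x => by
    rw [Real.norm_of_nonneg (hf0 x)]; exact hfc x
  have hlayer : ∀ (μ : Measure Ω) [IsFiniteMeasure μ],
      ∫ x, f x ∂μ = ∫ s in Set.Ioc 0 c, μ.real {x | s ≤ f x} := fun μ _ =>
    (Integrable.of_bound hf.aestronglyMeasurable c (.of_forall hbound)
      ).integral_eq_integral_Ioc_meas_le (.of_forall hf0) (.of_forall hfc)
  have hlevel_int : ∀ (μ : Measure Ω) [IsFiniteMeasure μ],
      IntegrableOn (fun s => μ.real {x | s ≤ f x}) (Set.Ioc 0 c) := by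
    intro μ _
    have hmeas : Measurable (fun s => μ.real {x | s ≤ f x}) :=
      Antitone.measurable fun s s' hss' => measureReal_mono fun _ hx => hss'.trans hx
    refine IntegrableOn.of_bound measure_Ioc_lt_top hmeas.aestronglyMeasurable (μ.real Set.univ)
      (.of_forall fun s => ?_)
    rw [Real.norm_of_nonneg measureReal_nonneg]
    exact measureReal_mono (Set.subset_univ _)
  rw [hlayer P, hlayer Q, sub_le_iff_le_add']
  have hconst : IntegrableOn (fun _ => t) (Set.Ioc (0 : ℝ) c) :=
    integrableOn_const measure_Ioc_lt_top.ne
  calc ∫ s in Set.Ioc 0 c, P.real {x | s ≤ f x}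
      ≤ ∫ s in Set.Ioc 0 c, (Q.real {x | s ≤ f x} + t) :=
        setIntegral_mono_on (hlevel_int P) ((hlevel_int Q).add hconst) measurableSet_Ioc
          fun s _ => hPQ _ (measurableSet_le measurable_const hf)
    _ = (∫ s in Set.Ioc 0 c, Q.real {x | s ≤ f x}) + t * c := by
        rw [integral_add (hlevel_int Q) hconst, setIntegral_const, Real.volume_real_Ioc_of_le hc,
          sub_zero, smul_eq_mul, mul_comm]

lemma integral_sub_integral_le_mul_of_forall_sub_le
    [IsProbabilityMeasure P] [IsProbabilityMeasure Q]
    {f : Ω → ℝ} (hf : Measurable f) {c t : ℝ} (hosc : ∀ x y, f x - f y ≤ c)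
    (hPQ : ∀ A, MeasurableSet A → P.real A ≤ Q.real A + t) :
    ∫ x, f x ∂P - ∫ x, f x ∂Q ≤ t * c := by
  have hne : Nonempty Ω := nonempty_of_isProbabilityMeasure P
  obtain ⟨x₀⟩ := id hne
  have hc : 0 ≤ c := by simpa using hosc x₀ x₀
  have hbdd : BddBelow (Set.range f) :=
    ⟨f x₀ - c, by rintro _ ⟨x, rfl⟩; linarith [hosc x₀ x]⟩
  set m := ⨅ y, f y
  have hm_le : ∀ x, m ≤ f x := ciInf_le hbdd
  have hle_m : ∀ x, f x ≤ m + c := fun x => by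
    have : f x - c ≤ m := le_ciInf fun y => by linarith [hosc x y]
    linarith
  have hshift : ∀ (μ : Measure Ω) [IsProbabilityMeasure μ],
      ∫ x, (f x - m) ∂μ = ∫ x, f x ∂μ - m := fun μ _ => by
    have hfint : Integrable f μ := .of_bound hf.aestronglyMeasurable (max |m| |m + c|)
      (.of_forall fun x => abs_le_max_abs_abs (hm_le x) (hle_m x))
    rw [integral_sub hfint (integrable_const m), integral_const, probReal_univ, one_smul]
  calc ∫ x, f x ∂P - ∫ x, f x ∂Q = ∫ x, (f x - m) ∂P - ∫ x, (f x - m) ∂Q := by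
        rw [hshift P, hshift Q, sub_sub_sub_cancel_right]
    _ ≤ t * c :=
        integral_sub_integral_le_mul_of_nonneg_of_le (hf.sub_const m) hc
          (fun x => sub_nonneg.mpr (hm_le x)) (fun x => by linarith [hle_m x]) hPQ

end TotalVariation

lemma norm_sub_le_sqrt_two_of_inner_nonneg {H : Type*} [NormedAddCommGroup H]
    [InnerProductSpace ℝ H] {u v : H} (huv : 0 ≤ ⟪u, v⟫) (hu : ‖u‖ ≤ 1) (hv : ‖v‖ ≤ 1) :
    ‖u - v‖ ≤ Real.sqrt 2 := by
  apply Real.le_sqrt_of_sq_le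
  rw [norm_sub_sq_real]
  nlinarith [norm_nonneg u, norm_nonneg v]

theorem mmd_le_of_indistinguishable_general
    {𝒳 : Type*} [MeasurableSpace 𝒳]
    {H : Type*} [NormedAddCommGroup H] [InnerProductSpace ℝ H] [CompleteSpace H]
    (φ : 𝒳 → H) (hφ : StronglyMeasurable φ)
    (hK0 : ∀ x y : 𝒳, 0 ≤ ⟪φ x, φ y⟫)
    (hK1 : ∀ x y : 𝒳, ⟪φ x, φ y⟫ ≤ 1)
    (ε δ : ℝ)
    (P Q : Measure 𝒳) [IsProbabilityMeasure P] [IsProbabilityMeasure Q]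
    (hPQ : ∀ A : Set 𝒳, MeasurableSet A →
      (P A).toReal ≤ Real.exp ε * (Q A).toReal + δ)
    (hQP : ∀ A : Set 𝒳, MeasurableSet A →
      (Q A).toReal ≤ Real.exp ε * (P A).toReal + δ) :
    ‖(∫ x, φ x ∂P) - ∫ x, φ x ∂Q‖ ≤
      Real.sqrt 2 * (1 - 2 * (1 - δ) / (1 + Real.exp ε)) := by
  have hnorm : ∀ x, ‖φ x‖ ≤ 1 := fun x => by
    have := hK1 x x
    rwa [real_inner_self_eq_norm_sq, pow_le_one_iff_of_nonneg (norm_nonneg _) two_ne_zero] at this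
  have hint : ∀ (μ : Measure 𝒳) [IsFiniteMeasure μ], Integrable φ μ := fun μ _ =>
    .of_bound hφ.aestronglyMeasurable 1 (.of_forall hnorm)
  set t := 1 - 2 * (1 - δ) / (1 + Real.exp ε)
  set v := (∫ x, φ x ∂P) - ∫ x, φ x ∂Q
  have hTV : ∀ A, MeasurableSet A → P.real A ≤ Q.real A + t := fun A hA =>
    measureReal_le_add_of_indistinguishable hA (hPQ A hA) (hQP Aᶜ hA.compl)
  have ht : 0 ≤ t := by simpa using hTV ∅ .empty
  have hsq : ‖v‖ ^ 2 = ∫ x, ⟪v, φ x⟫ ∂P - ∫ x, ⟪v, φ x⟫ ∂Q := by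
    rw [integral_inner (hint P), integral_inner (hint Q), ← inner_sub_right,
      real_inner_self_eq_norm_sq]
  have hosc : ∀ x y, ⟪v, φ x⟫ - ⟪v, φ y⟫ ≤ ‖v‖ * Real.sqrt 2 := fun x y => by
    rw [← inner_sub_right]
    exact (real_inner_le_norm _ _).trans <| mul_le_mul_of_nonneg_left
      (norm_sub_le_sqrt_two_of_inner_nonneg (hK0 x y) (hnorm x) (hnorm y)) (norm_nonneg v)
  have hle : ‖v‖ ^ 2 ≤ t * (‖v‖ * Real.sqrt 2) := hsq ▸
    integral_sub_integral_le_mul_of_forall_sub_le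
      (stronglyMeasurable_const.inner hφ).measurable hosc hTV
  rcases (norm_nonneg v).eq_or_lt with hv | hv
  · rw [← hv]
    exact mul_nonneg (Real.sqrt_nonneg 2) ht
  · exact le_of_mul_le_mul_right (by linarith [sq ‖v‖]) hv

/-- If `P` and `Q` are `(ε,δ)`-indistinguishable probability measures and `φ` is a
strongly measurable feature map with `0 ≤ ⟪φ x, φ y⟫ ≤ 1`, then the distance between
the mean embeddings is at most `√2 · (1 - 2(1-δ)/(1+e^ε))`. -/
theorem mmd_le_of_indistinguishable
    {𝒳 : Type*} [MeasurableSpace 𝒳]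
    {H : Type*} [NormedAddCommGroup H] [InnerProductSpace ℝ H] [CompleteSpace H]
    (φ : 𝒳 → H) (hφ : StronglyMeasurable φ)
    (hK0 : ∀ x y : 𝒳, 0 ≤ ⟪φ x, φ y⟫)
    (hK1 : ∀ x y : 𝒳, ⟪φ x, φ y⟫ ≤ 1)
    (ε δ : ℝ) (hε : 0 ≤ ε) (hδ0 : 0 ≤ δ) (hδ1 : δ ≤ 1)
    (P Q : Measure 𝒳) [IsProbabilityMeasure P] [IsProbabilityMeasure Q]
    (hPQ : ∀ A : Set 𝒳, MeasurableSet A →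
      (P A).toReal ≤ Real.exp ε * (Q A).toReal + δ)
    (hQP : ∀ A : Set 𝒳, MeasurableSet A →
      (Q A).toReal ≤ Real.exp ε * (P A).toReal + δ) :
    ‖(∫ x, φ x ∂P) - ∫ x, φ x ∂Q‖ ≤
      Real.sqrt 2 * (1 - 2 * (1 - δ) / (1 + Real.exp ε)) :=
  mmd_le_of_indistinguishable_general φ hφ hK0 hK1 ε δ P Q hPQ hQP
end

section
/- Let 𝒳 be a measurable space, H a real Hilbert space, and φ : 𝒳 → H a bounded strongly measurable map such that ‖φ(x) − φ(y)‖ ≤ C for all x, y ∈ 𝒳, where C ≥ 0. Let P and Q be probability measures on 𝒳, and let π be a probability measure on 𝒳 × 𝒳 whose first marginal is P and whose second marginal is Q (i.e., the pushforward of π under the first projection is P and under the second projection is Q). If the diagonal complement {(x,y) : x ≠ y} is measurable, then ‖∫ φ dP − ∫ φ dQ‖ ≤ C · π({(x,y) ∈ 𝒳 × 𝒳 : x ≠ y}). -/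
/-!
Both mean embeddings are integrals against the coupling `π`, so their difference is
`∫ (φ x - φ y) dπ`. This integrand vanishes on the diagonal and has norm at most `C` off it.
-/

open MeasureTheory

section

variable {α E : Type*} [MeasurableSpace α] [NormedAddCommGroup E] [NormedSpace ℝ E]

theorem integral_map_fst_sub_integral_map_snd {f : α → E} {π : Measure (α × α)}
    (h₁ : Integrable f (π.map Prod.fst)) (h₂ : Integrable f (π.map Prod.snd)) :
    ∫ x, f x ∂π.map Prod.fst - ∫ x, f x ∂π.map Prod.snd = ∫ p, (f p.1 - f p.2) ∂π := by
  rw [integral_map measurable_fst.aemeasurable h₁.1, integral_map measurable_snd.aemeasurable h₂.1]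
  exact (integral_sub (h₁.comp_measurable measurable_fst) (h₂.comp_measurable measurable_snd)).symm

theorem norm_integral_le_of_norm_le_const_of_forall_compl_eq_zero {f : α → E} {μ : Measure α}
    {s : Set α} {C : ℝ} (hs : μ s < ⊤) (hC : ∀ x ∈ s, ‖f x‖ ≤ C) (h₀ : ∀ x ∉ s, f x = 0) :
    ‖∫ x, f x ∂μ‖ ≤ C * μ.real s := by
  rw [← setIntegral_eq_integral_of_forall_compl_eq_zero h₀]
  exact norm_setIntegral_le_of_norm_le_const hs hC

end

theorem mean_embedding_dist_le_coupling_general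
    {𝒳 : Type*} [MeasurableSpace 𝒳]
    {H : Type*} [NormedAddCommGroup H] [InnerProductSpace ℝ H]
    (φ : 𝒳 → H) (hφ : StronglyMeasurable φ)
    (hbdd : ∃ M : ℝ, ∀ x : 𝒳, ‖φ x‖ ≤ M)
    (C : ℝ) (hC : ∀ x y : 𝒳, ‖φ x - φ y‖ ≤ C)
    (P Q : Measure 𝒳)
    (π : Measure (𝒳 × 𝒳)) [IsProbabilityMeasure π]
    (hfst : π.map Prod.fst = P) (hsnd : π.map Prod.snd = Q) :
    ‖(∫ x, φ x ∂P) - ∫ x, φ x ∂Q‖ ≤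
      C * (π {p : 𝒳 × 𝒳 | p.1 ≠ p.2}).toReal := by
  obtain ⟨M, hM⟩ := hbdd
  have hφ_int (μ : Measure 𝒳) [IsFiniteMeasure μ] : Integrable φ μ :=
    .of_bound hφ.aestronglyMeasurable M (ae_of_all _ hM)
  subst hfst hsnd
  rw [integral_map_fst_sub_integral_map_snd (hφ_int _) (hφ_int _)]
  exact norm_integral_le_of_norm_le_const_of_forall_compl_eq_zero (measure_lt_top _ _)
    (fun p _ ↦ hC p.1 p.2) (fun p hp ↦ by rw [(of_not_not hp : p.1 = p.2), sub_self])

/-- If `π` is a coupling of `P` and `Q` and `‖φ x − φ y‖ ≤ C` for all `x, y`, then the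
distance between the mean embeddings is at most `C · π({(x,y) : x ≠ y})`. -/
theorem mean_embedding_dist_le_coupling
    {𝒳 : Type*} [MeasurableSpace 𝒳]
    {H : Type*} [NormedAddCommGroup H] [InnerProductSpace ℝ H] [CompleteSpace H]
    (φ : 𝒳 → H) (hφ : StronglyMeasurable φ)
    (hbdd : ∃ M : ℝ, ∀ x : 𝒳, ‖φ x‖ ≤ M)
    (C : ℝ) (hC0 : 0 ≤ C) (hC : ∀ x y : 𝒳, ‖φ x - φ y‖ ≤ C)
    (P Q : Measure 𝒳) [IsProbabilityMeasure P] [IsProbabilityMeasure Q]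
    (π : Measure (𝒳 × 𝒳)) [IsProbabilityMeasure π]
    (hfst : π.map Prod.fst = P) (hsnd : π.map Prod.snd = Q)
    (hdiag : MeasurableSet {p : 𝒳 × 𝒳 | p.1 ≠ p.2}) :
    ‖(∫ x, φ x ∂P) - ∫ x, φ x ∂Q‖ ≤
      C * (π {p : 𝒳 × 𝒳 | p.1 ≠ p.2}).toReal :=
  mean_embedding_dist_le_coupling_general φ hφ hbdd C hC P Q π hfst hsnd
end

section
/- Let 𝒳 be a measurable space, H a real Hilbert space, and φ : 𝒳 → H a strongly measurable map satisfying 0 ≤ ⟨φ(x), φ(y)⟩ ≤ 1 for all x, y ∈ 𝒳. Then for any two probability measures P, Q on 𝒳, ‖∫ φ dP − ∫ φ dQ‖ ≤ √2 · TV(P,Q), where TV(P,Q) = sup over measurable sets A of |P(A) − Q(A)| is the total variation distance. -/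
/-!
Split `P - Q` along a Hahn decomposition `S` into finite measures `μ = (P - Q)|_S` and
`ν = (Q - P)|_Sᶜ`, so that `∫ φ dP - ∫ φ dQ = u - v` with `u = ∫ φ dμ`, `v = ∫ φ dν`.
Since `‖φ‖ ≤ 1`, both `‖u‖ ≤ μ(𝒳) = P(S) - Q(S)` and `‖v‖ ≤ ν(𝒳) = Q(Sᶜ) - P(Sᶜ)` are at most
the total variation `T`, and the nonnegative kernel gives `⟪u, v⟫ ≥ 0`. Hence
`‖u - v‖² = ‖u‖² + ‖v‖² - 2⟪u, v⟫ ≤ 2 T²`.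
-/

open MeasureTheory Set
open scoped RealInnerProductSpace

section InnerProductSpace

variable {E : Type*} [NormedAddCommGroup E] [InnerProductSpace ℝ E]

theorem norm_sub_le_sqrt_two_mul_of_inner_nonneg {u v : E} {T : ℝ} (huv : 0 ≤ ⟪u, v⟫)
    (hu : ‖u‖ ≤ T) (hv : ‖v‖ ≤ T) : ‖u - v‖ ≤ √2 * T := by
  have hT : 0 ≤ T := (norm_nonneg u).trans hu
  have hsq : ‖u - v‖ ^ 2 ≤ (√2 * T) ^ 2 := by
    rw [norm_sub_sq_real, mul_pow, Real.sq_sqrt zero_le_two]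
    nlinarith [norm_nonneg u, norm_nonneg v]
  exact pow_le_pow_iff_left₀ (norm_nonneg _) (by positivity) two_ne_zero |>.mp hsq

end InnerProductSpace

namespace MeasureTheory

variable {α : Type*} [MeasurableSpace α]

theorem Measure.real_univ_restrict_sub_restrict {μ ν : Measure α} [IsFiniteMeasure μ]
    [IsFiniteMeasure ν] {S : Set α} (h : ν.restrict S ≤ μ.restrict S) :
    (μ.restrict S - ν.restrict S).real univ = μ.real S - ν.real S := by
  have hS : ν S ≤ μ S := by simpa using Measure.le_iff'.1 h univ
  rw [measureReal_def, Measure.sub_apply MeasurableSet.univ h, Measure.restrict_apply_univ,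
    Measure.restrict_apply_univ, ENNReal.toReal_sub_of_le hS (measure_ne_top μ S),
    measureReal_def, measureReal_def]

/-- `P + ν = Q + μ` says `P - Q = μ - ν`; subtraction of measures truncates. -/
theorem Measure.exists_jordan_decomposition (P Q : Measure α) [IsFiniteMeasure P]
    [IsFiniteMeasure Q] :
    ∃ (μ ν : Measure α) (S : Set α), IsFiniteMeasure μ ∧ IsFiniteMeasure ν ∧ MeasurableSet S ∧
      P + ν = Q + μ ∧ μ.real univ = P.real S - Q.real S ∧
      ν.real univ = Q.real Sᶜ - P.real Sᶜ := by
  obtain ⟨S, hS, hQP, hPQ⟩ := hahn_decomposition P Q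
  have hle : Q.restrict S ≤ P.restrict S := Measure.le_iff.2 fun t ht => by
    simpa only [Measure.restrict_apply ht] using hQP _ (ht.inter hS) inter_subset_right
  have hle' : P.restrict Sᶜ ≤ Q.restrict Sᶜ := Measure.le_iff.2 fun t ht => by
    simpa only [Measure.restrict_apply ht] using hPQ _ (ht.inter hS.compl) inter_subset_right
  set μ := P.restrict S - Q.restrict S
  set ν := Q.restrict Sᶜ - P.restrict Sᶜ
  have hP : μ + Q.restrict S + P.restrict Sᶜ = P := by
    rw [Measure.sub_add_cancel_of_le hle, Measure.restrict_add_restrict_compl hS]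
  have hQ : Q.restrict S + (ν + P.restrict Sᶜ) = Q := by
    rw [Measure.sub_add_cancel_of_le hle', Measure.restrict_add_restrict_compl hS]
  refine ⟨μ, ν, S, Measure.isFiniteMeasure_sub, Measure.isFiniteMeasure_sub, hS, ?_,
    Measure.real_univ_restrict_sub_restrict hle, Measure.real_univ_restrict_sub_restrict hle'⟩
  calc P + ν = μ + Q.restrict S + P.restrict Sᶜ + ν := by rw [hP]
    _ = Q.restrict S + (ν + P.restrict Sᶜ) + μ := by abel
    _ = Q + μ := by rw [hQ]

theorem integral_sub_integral_eq_of_add_eq_add {E : Type*} [NormedAddCommGroup E]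
    [NormedSpace ℝ E] {f : α → E} {P Q μ ν : Measure α} (h : P + ν = Q + μ)
    (hP : Integrable f P) (hQ : Integrable f Q) (hμ : Integrable f μ) (hν : Integrable f ν) :
    ∫ x, f x ∂P - ∫ x, f x ∂Q = ∫ x, f x ∂μ - ∫ x, f x ∂ν := by
  have := congrArg (fun m => ∫ x, f x ∂m) h
  simp only [integral_add_measure hP hν, integral_add_measure hQ hμ] at this
  rw [sub_eq_sub_iff_add_eq_add, this, add_comm]

theorem inner_integral_integral_nonneg {E : Type*} [NormedAddCommGroup E] [InnerProductSpace ℝ E]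
    [CompleteSpace E] {φ : α → E} (hφ : ∀ x y, 0 ≤ ⟪φ x, φ y⟫) {μ ν : Measure α}
    (hμ : Integrable φ μ) (hν : Integrable φ ν) :
    0 ≤ ⟪∫ x, φ x ∂μ, ∫ y, φ y ∂ν⟫ := by
  rw [← integral_inner hν]
  refine integral_nonneg fun y => ?_
  rw [real_inner_comm, ← integral_inner hμ]
  exact integral_nonneg fun x => hφ y x

theorem bddAbove_abs_measureReal_sub (P Q : Measure α) [IsProbabilityMeasure P]
    [IsProbabilityMeasure Q] :
    BddAbove {r : ℝ | ∃ A : Set α, MeasurableSet A ∧ r = |(P A).toReal - (Q A).toReal|} := by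
  refine ⟨1, ?_⟩
  rintro r ⟨A, -, rfl⟩
  exact abs_sub_le_of_nonneg_of_le ENNReal.toReal_nonneg measureReal_le_one
    ENNReal.toReal_nonneg measureReal_le_one

end MeasureTheory

/-- For a feature map `φ` with `0 ≤ ⟪φ x, φ y⟫ ≤ 1`, the distance between the mean
embeddings of two probability measures is at most `√2` times the total variation
distance `sup_A |P(A) − Q(A)|`. -/
theorem mean_embedding_dist_le_tv
    {𝒳 : Type*} [MeasurableSpace 𝒳]
    {H : Type*} [NormedAddCommGroup H] [InnerProductSpace ℝ H] [CompleteSpace H]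
    (φ : 𝒳 → H) (hφ : StronglyMeasurable φ)
    (hK0 : ∀ x y : 𝒳, 0 ≤ ⟪φ x, φ y⟫)
    (hK1 : ∀ x y : 𝒳, ⟪φ x, φ y⟫ ≤ 1)
    (P Q : Measure 𝒳) [IsProbabilityMeasure P] [IsProbabilityMeasure Q] :
    ‖(∫ x, φ x ∂P) - ∫ x, φ x ∂Q‖ ≤
      Real.sqrt 2 *
        sSup {r : ℝ | ∃ A : Set 𝒳, MeasurableSet A ∧
          r = |(P A).toReal - (Q A).toReal|} := by
  have hφ_le : ∀ x, ‖φ x‖ ≤ 1 := fun x => by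
    simpa [real_inner_self_eq_norm_sq] using hK1 x x
  have hint : ∀ (μ : Measure 𝒳) [IsFiniteMeasure μ], Integrable φ μ := fun μ _ =>
    .of_bound hφ.aestronglyMeasurable 1 (.of_forall hφ_le)
  have hmass : ∀ (μ : Measure 𝒳) [IsFiniteMeasure μ], ‖∫ x, φ x ∂μ‖ ≤ μ.real univ := fun μ _ => by
    simpa using norm_integral_le_of_norm_le_const (μ := μ) (.of_forall hφ_le)
  have hTV : ∀ A, MeasurableSet A → |P.real A - Q.real A| ≤ _ := fun A hA =>
    le_csSup (bddAbove_abs_measureReal_sub P Q) ⟨A, hA, rfl⟩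
  obtain ⟨μ, ν, S, _, _, hS, hPQ, hμ, hν⟩ := Measure.exists_jordan_decomposition P Q
  rw [integral_sub_integral_eq_of_add_eq_add hPQ (hint P) (hint Q) (hint μ) (hint ν)]
  refine norm_sub_le_sqrt_two_mul_of_inner_nonneg
    (inner_integral_integral_nonneg hK0 (hint μ) (hint ν)) ?_ ?_
  · calc ‖∫ x, φ x ∂μ‖ ≤ P.real S - Q.real S := hμ ▸ hmass μ
      _ ≤ _ := (le_abs_self _).trans (hTV S hS)
  · calc ‖∫ x, φ x ∂ν‖ ≤ Q.real Sᶜ - P.real Sᶜ := hν ▸ hmass ν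
      _ ≤ _ := (le_abs_self _).trans ((abs_sub_comm _ _).trans_le (hTV Sᶜ hS.compl))
end

section
/- Let (Ω, μ) be a probability space, 𝒳 a measurable space, and let (Xᵢ)_{i≥1}, (Yᵢ)_{i≥1} : Ω → 𝒳 be sequences such that the pairs (Xᵢ, Yᵢ) are i.i.d., with X₁ distributed as P and Y₁ distributed as Q. Let f : 𝒳 → ℝ be measurable with |f(x)| ≤ 1 for all x, let τ ≥ 0 satisfy ∫ f dP − ∫ f dQ ≤ τ, let λ ∈ [0, 1/(2+τ)], and let α ∈ (0,1). Define K₀ = 1 and K_t = ∏_{i=1}^{t} (1 + λ·(f(Xᵢ) − f(Yᵢ) − τ)). Then K_t ≥ 0 for all t, and μ({ω : ∃ t ≥ 1 with K_t(ω) ≥ 1/α}) ≤ α. -/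
/-!
Each factor `1 + λ(f(Xᵢ) − f(Yᵢ) − τ)` is nonnegative because `f(x) − f(y) − τ ≥ −(2 + τ)` and
`λ(2 + τ) ≤ 1`; it is independent of the first `i` pairs and, under the null, has mean
`1 + λ(∫ f dP − ∫ f dQ − τ) ≤ 1`. Hence `K` is a nonnegative supermartingale with `K₀ = 1`, and
Ville's inequality `μ(∃ t, K_t ≥ c) ≤ 𝔼 K₀ / c` (optional stopping at the first time `K` reaches
`c` before a horizon `n`, then `n → ∞`) with `c = 1/α` gives the bound `α`.
-/

open MeasureTheory ProbabilityTheory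

namespace MeasureTheory

variable {Ω : Type*} {m0 : MeasurableSpace Ω} {μ : Measure Ω}

section Ville

variable {ℱ : Filtration ℕ m0} {K : ℕ → Ω → ℝ}

theorem Supermartingale.integral_stoppedValue_le_integral_zero [IsFiniteMeasure μ]
    (hK : Supermartingale K ℱ μ) {σ : Ω → ℕ∞} (hσ : IsStoppingTime ℱ σ) {N : ℕ}
    (hσN : ∀ ω, σ ω ≤ N) :
    ∫ ω, stoppedValue K σ ω ∂μ ≤ ∫ ω, K 0 ω ∂μ := by
  have h := hK.neg.expected_stoppedValue_mono (isStoppingTime_const ℱ 0) hσ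
    (fun _ => zero_le) hσN
  simpa [stoppedValue, integral_neg] using h

theorem Supermartingale.mul_measureReal_exists_le_le [IsFiniteMeasure μ]
    (hK : Supermartingale K ℱ μ) (hnn : 0 ≤ K) (c : ℝ) (n : ℕ) :
    c * μ.real {ω | ∃ t ≤ n, c ≤ K t ω} ≤ ∫ ω, K 0 ω ∂μ := by
  set A := {ω | ∃ t ≤ n, c ≤ K t ω}
  let σ : Ω → ℕ∞ := fun ω => (hittingBtwn K (Set.Ici c) 0 n ω : ℕ)
  have hσ : IsStoppingTime ℱ σ :=
    hK.stronglyAdapted.adapted.isStoppingTime_hittingBtwn measurableSet_Ici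
  have hσn : ∀ ω, σ ω ≤ n := fun ω => ENat.natCast_le_natCast.mpr (hittingBtwn_le ω)
  have hA : MeasurableSet A := by
    have : A = ⋃ t ∈ Set.Iic n, {ω | c ≤ K t ω} := by ext; simp [A]
    rw [this]
    exact .biUnion (Set.to_countable _) fun t _ =>
      measurableSet_le measurable_const ((hK.stronglyMeasurable t).measurable.mono (ℱ.le t) le_rfl)
  have hint : Integrable (stoppedValue K σ) μ := integrable_stoppedValue ℕ hσ hK.integrable hσn
  have hcA : ∀ ω ∈ A, c ≤ stoppedValue K σ ω := fun ω ⟨t, ht, hct⟩ =>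
    stoppedValue_hittingBtwn_mem ⟨t, ⟨zero_le, ht⟩, hct⟩
  calc c * μ.real A ≤ ∫ ω in A, stoppedValue K σ ω ∂μ :=
        setIntegral_ge_of_const_le_real hA (measure_ne_top μ A) hcA hint.integrableOn
    _ ≤ ∫ ω, stoppedValue K σ ω ∂μ :=
        setIntegral_le_integral hint (.of_forall fun ω => hnn _ ω)
    _ ≤ ∫ ω, K 0 ω ∂μ := hK.integral_stoppedValue_le_integral_zero hσ hσn

/-- Ville's inequality. -/
theorem Supermartingale.measure_exists_le_le [IsFiniteMeasure μ]
    (hK : Supermartingale K ℱ μ) (hnn : 0 ≤ K) {c : ℝ} (hc : 0 < c) :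
    μ {ω | ∃ t, c ≤ K t ω} ≤ ENNReal.ofReal ((∫ ω, K 0 ω ∂μ) / c) := by
  have hunion : {ω | ∃ t, c ≤ K t ω} = ⋃ n, {ω | ∃ t ≤ n, c ≤ K t ω} := by
    ext ω
    simp only [Set.mem_ofPred_eq, Set.mem_iUnion]
    exact ⟨fun ⟨t, h⟩ => ⟨t, t, le_rfl, h⟩, fun ⟨_, t, _, h⟩ => ⟨t, h⟩⟩
  have hmono : Monotone fun n => {ω | ∃ t ≤ n, c ≤ K t ω} :=
    fun _ _ hmn _ ⟨t, ht, h⟩ => ⟨t, ht.trans hmn, h⟩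
  rw [hunion, hmono.measure_iUnion]
  refine iSup_le fun n => (ofReal_measureReal).symm.le.trans (ENNReal.ofReal_le_ofReal ?_)
  rw [le_div_iff₀ hc, mul_comm]
  exact hK.mul_measureReal_exists_le_le hnn c n

end Ville

/-- Unlike `Filtration.natural`, the `t`-th σ-algebra does not contain `σ(u t)`. -/
def Filtration.naturalBefore {β : Type*} [MeasurableSpace β] (u : ℕ → Ω → β)
    (hu : ∀ i, Measurable (u i)) : Filtration ℕ m0 where
  seq t := ⨆ j < t, MeasurableSpace.comap (u j) inferInstance
  mono' _ _ hst := biSup_mono fun _ hj => hj.trans_le hst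
  le' _ := iSup₂_le fun j _ => (hu j).comap_le

variable {β : Type*} [MeasurableSpace β] {u : ℕ → Ω → β} {hu : ∀ i, Measurable (u i)}

theorem Filtration.measurable_naturalBefore {j t : ℕ} (hjt : j < t) :
    Measurable[Filtration.naturalBefore u hu t] (u j) :=
  (comap_measurable (u j)).mono (le_iSup₂ (f := fun j (_ : j < t) =>
    MeasurableSpace.comap (u j) inferInstance) j hjt) le_rfl

end MeasureTheory

namespace ProbabilityTheory

open MeasureTheory

variable {Ω : Type*} {m0 : MeasurableSpace Ω} {μ : Measure Ω}
  {β : Type*} [MeasurableSpace β] {u : ℕ → Ω → β} {hu : ∀ i, Measurable (u i)}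

theorem iIndepFun.indep_comap_naturalBefore (hindep : iIndepFun u μ) (t : ℕ) :
    Indep (MeasurableSpace.comap (u t) inferInstance) (Filtration.naturalBefore u hu t) μ := by
  have h := indep_iSup_of_disjoint (fun k => (hu k).comap_le) hindep
    (S := {t}) (T := Set.Iio t) (by simp)
  simp only [iSup_singleton] at h
  exact h

variable [IsFiniteMeasure μ] {W : ℕ → Ω → ℝ}

theorem iIndepFun.integrable_prod_range (hindep : iIndepFun W μ) (hW : ∀ i, Measurable (W i))
    (hint : ∀ i, Integrable (W i) μ) (t : ℕ) :
    Integrable (fun ω => ∏ i ∈ Finset.range t, W i ω) μ := by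
  induction t with
  | zero => simp
  | succ t ih =>
    have h := (hindep.indepFun_prod_range_succ hW t).integrable_mul
      (by rwa [Finset.prod_fn]) (hint t)
    simpa [Finset.prod_range_succ, Finset.prod_fn, Pi.mul_def] using h

theorem iIndepFun.supermartingale_prod_range (hindep : iIndepFun W μ)
    (hW : ∀ i, Measurable (W i)) (hint : ∀ i, Integrable (W i) μ) (hnn : ∀ i ω, 0 ≤ W i ω)
    (hmean : ∀ i, ∫ ω, W i ω ∂μ ≤ 1) :
    Supermartingale (fun t ω => ∏ i ∈ Finset.range t, W i ω)
      (Filtration.naturalBefore W hW) μ := by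
  set ℱ := Filtration.naturalBefore W hW
  have hadapted : StronglyAdapted ℱ fun t ω => ∏ i ∈ Finset.range t, W i ω := fun t =>
    (Finset.measurable_prod _ fun i hi =>
      Filtration.measurable_naturalBefore (Finset.mem_range.mp hi)).stronglyMeasurable
  refine supermartingale_nat hadapted (hindep.integrable_prod_range hW hint) fun t => ?_
  have hsucc : (fun ω => ∏ i ∈ Finset.range (t + 1), W i ω)
      = (fun ω => ∏ i ∈ Finset.range t, W i ω) * W t := by
    funext ω; simp [Finset.prod_range_succ]
  have hcond : μ[W t | ℱ t] =ᵐ[μ] fun _ => ∫ ω, W t ω ∂μ :=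
    condExp_indep_eq (hW t).comap_le (ℱ.le t)
      (comap_measurable (W t)).stronglyMeasurable (hindep.indep_comap_naturalBefore t)
  have hpull := condExp_mul_of_stronglyMeasurable_left (m := ℱ t) (hadapted t)
    (hsucc ▸ hindep.integrable_prod_range hW hint (t + 1)) (hint t)
  rw [hsucc]
  filter_upwards [hpull, hcond] with ω hpullω hcondω
  rw [hpullω, Pi.mul_apply, hcondω]
  exact mul_le_of_le_one_right (Finset.prod_nonneg fun i _ => hnn i ω) (hmean t)

end ProbabilityTheory

theorem mul_le_one_of_le_one_div {a b : ℝ} (ha : 0 ≤ a) (h : a ≤ 1 / b) : a * b ≤ 1 := by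
  rcases le_or_gt b 0 with hb | hb
  · exact (mul_nonpos_of_nonneg_of_nonpos ha hb).trans zero_le_one
  · rwa [le_div_iff₀ hb] at h

section WealthProcess

variable {𝒳 : Type*} {f : 𝒳 → ℝ} {τ lam : ℝ}

def wealthFactor (f : 𝒳 → ℝ) (τ lam : ℝ) (z : 𝒳 × 𝒳) : ℝ :=
  1 + lam * (f z.1 - f z.2 - τ)

theorem wealthFactor_nonneg (hf1 : ∀ x, |f x| ≤ 1) (hlam0 : 0 ≤ lam)
    (hlam1 : lam ≤ 1 / (2 + τ)) (z : 𝒳 × 𝒳) : 0 ≤ wealthFactor f τ lam z := by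
  have hlam := mul_le_one_of_le_one_div hlam0 hlam1
  have hdiff : -(2 + τ) ≤ f z.1 - f z.2 - τ := by
    linarith [(abs_le.mp (hf1 z.1)).1, (abs_le.mp (hf1 z.2)).2]
  unfold wealthFactor
  nlinarith [mul_le_mul_of_nonneg_left hdiff hlam0]

variable [MeasurableSpace 𝒳]

theorem measurable_wealthFactor (hf : Measurable f) : Measurable (wealthFactor f τ lam) := by
  unfold wealthFactor
  fun_prop

variable {Ω : Type*} [MeasurableSpace Ω] {μ : Measure Ω}

theorem integrable_comp_of_abs_le_one [IsFiniteMeasure μ] (hf : Measurable f)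
    (hf1 : ∀ x, |f x| ≤ 1) {X : Ω → 𝒳} (hX : Measurable X) : Integrable (fun ω => f (X ω)) μ :=
  .of_bound (hf.comp hX).aestronglyMeasurable 1 (.of_forall fun ω => hf1 (X ω))

theorem integrable_wealthFactor_comp [IsFiniteMeasure μ] (hf : Measurable f)
    (hf1 : ∀ x, |f x| ≤ 1) {X Y : Ω → 𝒳} (hX : Measurable X) (hY : Measurable Y) :
    Integrable (fun ω => wealthFactor f τ lam (X ω, Y ω)) μ :=
  (integrable_const 1).add
    ((((integrable_comp_of_abs_le_one hf hf1 hX).sub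
      (integrable_comp_of_abs_le_one hf hf1 hY)).sub (integrable_const τ)).const_mul lam)

theorem integral_wealthFactor_comp [IsProbabilityMeasure μ] (hf : Measurable f)
    (hf1 : ∀ x, |f x| ≤ 1) {X Y : Ω → 𝒳} (hX : Measurable X) (hY : Measurable Y) :
    ∫ ω, wealthFactor f τ lam (X ω, Y ω) ∂μ
      = 1 + lam * ((∫ x, f x ∂μ.map X) - (∫ x, f x ∂μ.map Y) - τ) := by
  have hfX := integrable_comp_of_abs_le_one (μ := μ) hf hf1 hX
  have hfY := integrable_comp_of_abs_le_one (μ := μ) hf hf1 hY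
  have hdiff : Integrable (fun ω => f (X ω) - f (Y ω)) μ := hfX.sub hfY
  have hdiffτ : Integrable (fun ω => f (X ω) - f (Y ω) - τ) μ := hdiff.sub (integrable_const τ)
  rw [integral_map hX.aemeasurable hf.aestronglyMeasurable,
    integral_map hY.aemeasurable hf.aestronglyMeasurable]
  simp only [wealthFactor]
  rw [integral_add (integrable_const 1) (hdiffτ.const_mul lam), integral_const_mul,
    integral_sub hdiff (integrable_const τ), integral_sub hfX hfY]
  simp

end WealthProcess

theorem abstract_test_type_I_error_general
    {Ω : Type*} [MeasurableSpace Ω] (μ : Measure Ω) [IsProbabilityMeasure μ]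
    {𝒳 : Type*} [MeasurableSpace 𝒳]
    (X Y : ℕ → Ω → 𝒳) (hX : ∀ i, Measurable (X i)) (hY : ∀ i, Measurable (Y i))
    (hindep : iIndepFun
      (fun i ω => (X i ω, Y i ω)) μ)
    (hident : ∀ i, IdentDistrib (fun ω => (X i ω, Y i ω))
      (fun ω => (X 0 ω, Y 0 ω)) μ μ)
    (P Q : Measure 𝒳)
    (hP : μ.map (X 0) = P) (hQ : μ.map (Y 0) = Q)
    (f : 𝒳 → ℝ) (hf : Measurable f) (hf1 : ∀ x, |f x| ≤ 1)
    (τ : ℝ) (hnull : (∫ x, f x ∂P) - ∫ x, f x ∂Q ≤ τ)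
    (lam : ℝ) (hlam0 : 0 ≤ lam) (hlam1 : lam ≤ 1 / (2 + τ))
    (α : ℝ) (hα0 : 0 < α)
    (K : ℕ → Ω → ℝ)
    (hK : ∀ t ω, K t ω =
      ∏ i ∈ Finset.range t, (1 + lam * (f (X i ω) - f (Y i ω) - τ))) :
    (∀ t ω, 0 ≤ K t ω) ∧
      μ {ω | ∃ t : ℕ, 1 ≤ t ∧ 1 / α ≤ K t ω} ≤ ENNReal.ofReal α := by
  set W : ℕ → Ω → ℝ := fun i ω => wealthFactor f τ lam (X i ω, Y i ω)
  have hW : ∀ i, Measurable (W i) := fun i =>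
    (measurable_wealthFactor hf).comp ((hX i).prodMk (hY i))
  have hWnn : ∀ i ω, 0 ≤ W i ω := fun i ω => wealthFactor_nonneg hf1 hlam0 hlam1 _
  have hWindep : iIndepFun W μ :=
    hindep.comp (fun _ => wealthFactor f τ lam) fun _ => measurable_wealthFactor hf
  have hWmean : ∀ i, ∫ ω, W i ω ∂μ ≤ 1 := fun i => by
    have hWi : ∫ ω, W i ω ∂μ = ∫ ω, W 0 ω ∂μ :=
      ((hident i).comp (measurable_wealthFactor hf)).integral_eq
    rw [hWi, integral_wealthFactor_comp hf hf1 (hX 0) (hY 0), hP, hQ]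
    nlinarith [mul_nonpos_of_nonneg_of_nonpos hlam0 (sub_nonpos.mpr hnull)]
  have hKW : K = fun t ω => ∏ i ∈ Finset.range t, W i ω := funext fun t => funext (hK t)
  have hsuper := hWindep.supermartingale_prod_range hW
    (fun i => integrable_wealthFactor_comp hf hf1 (hX i) (hY i)) hWnn hWmean
  rw [← hKW] at hsuper
  have hKnn : ∀ t ω, 0 ≤ K t ω := fun t ω => by
    rw [hK]
    exact Finset.prod_nonneg fun i _ => hWnn i ω
  refine ⟨hKnn, ?_⟩
  calc μ {ω | ∃ t : ℕ, 1 ≤ t ∧ 1 / α ≤ K t ω}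
      ≤ μ {ω | ∃ t, 1 / α ≤ K t ω} := measure_mono fun _ ⟨t, _, h⟩ => ⟨t, h⟩
    _ ≤ ENNReal.ofReal ((∫ ω, K 0 ω ∂μ) / (1 / α)) :=
        hsuper.measure_exists_le_le hKnn (one_div_pos.mpr hα0)
    _ = ENNReal.ofReal α := by simp [hK]

/-- Ville-type Type I error control for the abstract wealth process of the sequential
DP test: if the pairs `(Xᵢ, Yᵢ)` are i.i.d. with `X` distributed as `P` and `Y` as `Q`,
`|f| ≤ 1`, `∫ f dP − ∫ f dQ ≤ τ`, and `λ ∈ [0, 1/(2+τ)]`, then the wealth process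
`K_t = ∏_{i<t} (1 + λ(f(Xᵢ) − f(Yᵢ) − τ))` is nonnegative and exceeds `1/α` at some time
with probability at most `α`. -/
theorem abstract_test_type_I_error
    {Ω : Type*} [MeasurableSpace Ω] (μ : Measure Ω) [IsProbabilityMeasure μ]
    {𝒳 : Type*} [MeasurableSpace 𝒳]
    (X Y : ℕ → Ω → 𝒳) (hX : ∀ i, Measurable (X i)) (hY : ∀ i, Measurable (Y i))
    (hindep : iIndepFun
      (fun i ω => (X i ω, Y i ω)) μ)
    (hident : ∀ i, IdentDistrib (fun ω => (X i ω, Y i ω))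
      (fun ω => (X 0 ω, Y 0 ω)) μ μ)
    (P Q : Measure 𝒳)
    (hP : μ.map (X 0) = P) (hQ : μ.map (Y 0) = Q)
    (f : 𝒳 → ℝ) (hf : Measurable f) (hf1 : ∀ x, |f x| ≤ 1)
    (τ : ℝ) (hτ : 0 ≤ τ) (hnull : (∫ x, f x ∂P) - ∫ x, f x ∂Q ≤ τ)
    (lam : ℝ) (hlam0 : 0 ≤ lam) (hlam1 : lam ≤ 1 / (2 + τ))
    (α : ℝ) (hα0 : 0 < α) (hα1 : α < 1)
    (K : ℕ → Ω → ℝ)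
    (hK : ∀ t ω, K t ω =
      ∏ i ∈ Finset.range t, (1 + lam * (f (X i ω) - f (Y i ω) - τ))) :
    (∀ t ω, 0 ≤ K t ω) ∧
      μ {ω | ∃ t : ℕ, 1 ≤ t ∧ 1 / α ≤ K t ω} ≤ ENNReal.ofReal α :=
  abstract_test_type_I_error_general μ X Y hX hY hindep hident P Q hP hQ f hf hf1 τ hnull lam hlam0
    hlam1 α hα0 K hK
end

section
/- Let (Ω, μ) be a probability space, 𝒳 a measurable space, and let (Xᵢ)_{i≥1}, (Yᵢ)_{i≥1} : Ω → 𝒳 be sequences such that the pairs (Xᵢ, Yᵢ) are i.i.d., with X₁ distributed as P and Y₁ distributed as Q. Let f : 𝒳 → ℝ be measurable with |f(x)| ≤ 1 for all x, let τ ∈ [0, √2], and suppose m := ∫ f dP − ∫ f dQ > τ. Set Δ := m − τ. Then there exists λ ∈ [0, 1/(8+4τ)] such that, defining K_t(λ) = ∏_{i=1}^{t} (1 + λ·(f(Xᵢ) − f(Yᵢ) − τ)), for μ-almost every ω we have liminf_{t→∞} (log K_t(λ)(ω))/t ≥ Δ²/768. In particular, under the alternative hypothesis the wealth process grows exponentially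 at rate Ω(Δ²) almost surely. -/
/-!
Write `Zᵢ = f(Xᵢ) − f(Yᵢ) − τ` and `c = 2 + τ`, so that `|Zᵢ| ≤ c` and `E Zᵢ = Δ ≤ c`. For the
bet `λ = Δ / (4c²)` we have `|λ Zᵢ| ≤ 1/4`, and `log (1 + x) ≥ x − 2x²` on `[-1/2, ∞)` gives
`E log (1 + λ Zᵢ) ≥ λΔ − 2λ²c² = Δ² / (8c²)`. The strong law of large numbers, applied to the
i.i.d. bounded variables `log (1 + λ Zᵢ)`, makes `log K_t(λ) / t` converge almost surely to this
expectation, and `c < 4` because `τ < m ≤ 2`.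
-/

open MeasureTheory ProbabilityTheory Filter Topology

namespace Real

theorem sub_two_mul_sq_le_log_one_add {x : ℝ} (hx : -(1 / 2) ≤ x) :
    x - 2 * x ^ 2 ≤ log (1 + x) := by
  have hpos : 0 < 1 + x := by linarith
  have hdiv : x - 2 * x ^ 2 ≤ x / (1 + x) := by
    rw [le_div_iff₀ hpos]
    nlinarith [mul_nonneg (sq_nonneg x) (show (0 : ℝ) ≤ 1 + 2 * x by linarith)]
  calc x - 2 * x ^ 2 ≤ x / (1 + x) := hdiv
    _ = 1 - (1 + x)⁻¹ := by field_simp; ring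
    _ ≤ log (1 + x) := one_sub_inv_le_log_of_pos hpos

theorem abs_log_one_add_le_one {x : ℝ} (hx : |x| ≤ 1 / 2) : |log (1 + x)| ≤ 1 := by
  obtain ⟨hlo, hhi⟩ := abs_le.1 hx
  have hlower := sub_two_mul_sq_le_log_one_add hlo
  have hupper := log_le_sub_one_of_pos (show 0 < 1 + x by linarith)
  rw [abs_le]
  constructor <;> nlinarith

end Real

theorem abs_mul_le_half {lam x c : ℝ} (hlam : 0 ≤ lam) (hx : |x| ≤ c) (hlamc : lam * c ≤ 1 / 2) :
    |lam * x| ≤ 1 / 2 := by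
  rw [abs_mul, abs_of_nonneg hlam]
  exact (mul_le_mul_of_nonneg_left hx hlam).trans hlamc

theorem div_mul_le_quarter {Δ c : ℝ} (hΔ0 : 0 ≤ Δ) (hΔc : Δ ≤ c) :
    Δ / (4 * c ^ 2) * c ≤ 1 / 4 := by
  rcases hΔ0.eq_or_lt with rfl | hΔ
  · norm_num
  have hc : 0 < c := hΔ.trans_le hΔc
  rw [div_mul_eq_mul_div, div_le_iff₀ (by positivity)]
  nlinarith

section LogGrowth

variable {Ω : Type*} [MeasurableSpace Ω] {μ : Measure Ω}

theorem ae_tendsto_log_prod_div_of_iid {E : Type*} [MeasurableSpace E] {V : ℕ → Ω → E}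
    (hindep : iIndepFun V μ) (hident : ∀ i, IdentDistrib (V i) (V 0) μ μ)
    {h : E → ℝ} (hh : Measurable h) (hh0 : ∀ x, h x ≠ 0)
    (hint : Integrable (fun ω => Real.log (h (V 0 ω))) μ) :
    ∀ᵐ ω ∂μ, Tendsto (fun t : ℕ => Real.log (∏ i ∈ Finset.range t, h (V i ω)) / t) atTop
      (𝓝 (∫ ω, Real.log (h (V 0 ω)) ∂μ)) := by
  have hlog : Measurable fun x => Real.log (h x) := Real.measurable_log.comp hh
  have hslln := strong_law_ae_real (fun i ω => Real.log (h (V i ω))) hint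
    (fun i j hij => (hindep.indepFun hij).comp hlog hlog) (fun i => (hident i).comp hlog)
  filter_upwards [hslln] with ω hω
  simpa only [Real.log_prod fun i _ => hh0 (V i ω)] using hω

variable [IsProbabilityMeasure μ] {Z : Ω → ℝ} {c lam : ℝ}

theorem integrable_log_one_add_mul (hZ : AEStronglyMeasurable Z μ) (hZc : ∀ ω, |Z ω| ≤ c)
    (hlam : 0 ≤ lam) (hlamc : lam * c ≤ 1 / 2) :
    Integrable (fun ω => Real.log (1 + lam * Z ω)) μ := by
  refine Integrable.of_bound ?_ 1 (ae_of_all _ fun ω => ?_)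
  · exact (Real.measurable_log.comp_aemeasurable
      (aemeasurable_const.add (hZ.aemeasurable.const_mul lam))).aestronglyMeasurable
  · exact Real.abs_log_one_add_le_one (abs_mul_le_half hlam (hZc ω) hlamc)

theorem mul_integral_sub_le_integral_log_one_add_mul (hZ : AEStronglyMeasurable Z μ)
    (hZc : ∀ ω, |Z ω| ≤ c) (hlam : 0 ≤ lam) (hlamc : lam * c ≤ 1 / 2) :
    lam * ∫ ω, Z ω ∂μ - 2 * lam ^ 2 * c ^ 2 ≤ ∫ ω, Real.log (1 + lam * Z ω) ∂μ := by
  have hZint : Integrable Z μ :=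
    Integrable.of_bound hZ c (ae_of_all _ fun ω => (Real.norm_eq_abs _).trans_le (hZc ω))
  have hpointwise : ∀ ω, lam * Z ω - 2 * lam ^ 2 * c ^ 2 ≤ Real.log (1 + lam * Z ω) := by
    intro ω
    have hsq : (lam * Z ω) ^ 2 ≤ lam ^ 2 * c ^ 2 := by
      rw [mul_pow]
      exact mul_le_mul_of_nonneg_left (sq_le_sq.2 ((hZc ω).trans (le_abs_self c))) (sq_nonneg _)
    have hge : -(1 / 2) ≤ lam * Z ω := (abs_le.1 (abs_mul_le_half hlam (hZc ω) hlamc)).1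
    linarith [Real.sub_two_mul_sq_le_log_one_add hge]
  calc lam * ∫ ω, Z ω ∂μ - 2 * lam ^ 2 * c ^ 2
      = ∫ ω, (lam * Z ω - 2 * lam ^ 2 * c ^ 2) ∂μ := by
        rw [integral_sub (hZint.const_mul lam) (integrable_const _), integral_const_mul,
          integral_const, probReal_univ, one_smul]
    _ ≤ ∫ ω, Real.log (1 + lam * Z ω) ∂μ :=
        integral_mono ((hZint.const_mul lam).sub (integrable_const _))
          (integrable_log_one_add_mul hZ hZc hlam hlamc) hpointwise

theorem sq_div_le_integral_log_one_add_mul (hZ : AEStronglyMeasurable Z μ) (hZc : ∀ ω, |Z ω| ≤ c)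
    {Δ : ℝ} (hmean : ∫ ω, Z ω ∂μ = Δ) (hΔ0 : 0 ≤ Δ) (hΔc : Δ ≤ c) :
    Δ ^ 2 / (8 * c ^ 2) ≤ ∫ ω, Real.log (1 + Δ / (4 * c ^ 2) * Z ω) ∂μ := by
  rcases hΔ0.eq_or_lt with rfl | hΔ
  · simp
  have hc : 0 < c := hΔ.trans_le hΔc
  have h := mul_integral_sub_le_integral_log_one_add_mul hZ hZc (by positivity)
    ((div_mul_le_quarter hΔ.le hΔc).trans (by norm_num))
  rw [hmean] at h
  convert h using 1
  field_simp
  ring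

theorem ae_sq_div_le_liminf_log_prod_div {E : Type*} [MeasurableSpace E] {V : ℕ → Ω → E}
    (hV : AEMeasurable (V 0) μ) (hindep : iIndepFun V μ)
    (hident : ∀ i, IdentDistrib (V i) (V 0) μ μ) {ζ : E → ℝ} (hζ : Measurable ζ) {Δ : ℝ}
    (hζc : ∀ x, |ζ x| ≤ c) (hmean : ∫ ω, ζ (V 0 ω) ∂μ = Δ) (hΔ0 : 0 ≤ Δ) (hΔc : Δ ≤ c) :
    ∀ᵐ ω ∂μ, Δ ^ 2 / (8 * c ^ 2) ≤ liminf (fun t : ℕ =>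
      Real.log (∏ i ∈ Finset.range t, (1 + Δ / (4 * c ^ 2) * ζ (V i ω))) / t) atTop := by
  have hbet : Δ / (4 * c ^ 2) * c ≤ 1 / 2 := (div_mul_le_quarter hΔ0 hΔc).trans (by norm_num)
  have hlam : 0 ≤ Δ / (4 * c ^ 2) := by positivity
  have hZ : AEStronglyMeasurable (fun ω => ζ (V 0 ω)) μ :=
    (hζ.comp_aemeasurable hV).aestronglyMeasurable
  have hne : ∀ x, 1 + Δ / (4 * c ^ 2) * ζ x ≠ 0 := fun x => by
    linarith [(abs_le.1 (abs_mul_le_half hlam (hζc x) hbet)).1]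
  filter_upwards [ae_tendsto_log_prod_div_of_iid hindep hident (by fun_prop) hne
    (integrable_log_one_add_mul hZ (fun ω => hζc (V 0 ω)) hlam hbet)] with ω hω
  rw [hω.liminf_eq]
  exact sq_div_le_integral_log_one_add_mul hZ (fun ω => hζc (V 0 ω)) hmean hΔ0 hΔc

end LogGrowth

theorem integral_comp_sub_comp_eq_integral_map_sub {Ω E : Type*} [MeasurableSpace Ω]
    [MeasurableSpace E] {μ : Measure Ω} [IsFiniteMeasure μ] {X Y : Ω → E}
    (hX : AEMeasurable X μ) (hY : AEMeasurable Y μ) {f : E → ℝ} (hf : Measurable f) {C : ℝ}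
    (hfC : ∀ x, |f x| ≤ C) :
    ∫ ω, (f (X ω) - f (Y ω)) ∂μ = ∫ x, f x ∂(μ.map X) - ∫ x, f x ∂(μ.map Y) := by
  have hint : ∀ {Z : Ω → E}, AEMeasurable Z μ → Integrable (fun ω => f (Z ω)) μ := fun hZ =>
    .of_bound (hf.comp_aemeasurable hZ).aestronglyMeasurable C (ae_of_all _ fun ω => hfC _)
  rw [integral_sub (hint hX) (hint hY), integral_map hX hf.aestronglyMeasurable,
    integral_map hY hf.aestronglyMeasurable]

theorem abstract_test_growth_under_alternative_general
    {Ω : Type*} [MeasurableSpace Ω] (μ : Measure Ω) [IsProbabilityMeasure μ]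
    {𝒳 : Type*} [MeasurableSpace 𝒳]
    (X Y : ℕ → Ω → 𝒳) (hX : ∀ i, Measurable (X i)) (hY : ∀ i, Measurable (Y i))
    (hindep : iIndepFun
      (fun i ω => (X i ω, Y i ω)) μ)
    (hident : ∀ i, IdentDistrib (fun ω => (X i ω, Y i ω))
      (fun ω => (X 0 ω, Y 0 ω)) μ μ)
    (P Q : Measure 𝒳)
    (hP : μ.map (X 0) = P) (hQ : μ.map (Y 0) = Q)
    (f : 𝒳 → ℝ) (hf : Measurable f) (hf1 : ∀ x, |f x| ≤ 1)
    (τ : ℝ) (hτ0 : 0 ≤ τ)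
    (m Δ : ℝ) (hm : m = (∫ x, f x ∂P) - ∫ x, f x ∂Q) (halt : τ < m)
    (hΔ : Δ = m - τ) :
    ∃ lam : ℝ, lam ∈ Set.Icc 0 (1 / (8 + 4 * τ)) ∧
      ∀ᵐ ω ∂μ,
        Δ ^ 2 / 768 ≤
          liminf (fun t : ℕ =>
            Real.log (∏ i ∈ Finset.range t,
              (1 + lam * (f (X i ω) - f (Y i ω) - τ))) / t) atTop := by
  have hdiff : ∀ x y, |f x - f y| ≤ 2 := fun x y =>
    (abs_sub _ _).trans (by linarith [hf1 x, hf1 y])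
  have hintD : Integrable (fun ω => f (X 0 ω) - f (Y 0 ω)) μ :=
    .of_bound ((hf.comp (hX 0)).sub (hf.comp (hY 0))).aestronglyMeasurable 2
      (ae_of_all _ fun ω => hdiff _ _)
  have hmD : m = ∫ ω, (f (X 0 ω) - f (Y 0 ω)) ∂μ := by
    rw [hm, ← hP, ← hQ, integral_comp_sub_comp_eq_integral_map_sub (hX 0).aemeasurable
      (hY 0).aemeasurable hf hf1]
  have hm2 : m ≤ 2 := by
    have hnorm := norm_integral_le_of_norm_le_const (f := fun ω => f (X 0 ω) - f (Y 0 ω))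
      (ae_of_all μ fun ω => hdiff (X 0 ω) (Y 0 ω))
    rw [hmD]
    simpa using (le_abs_self _).trans hnorm
  have hmean : ∫ ω, (f (X 0 ω) - f (Y 0 ω) - τ) ∂μ = Δ := by
    rw [integral_sub hintD (integrable_const τ), ← hmD, hΔ]
    simp
  have hζc : ∀ x y, |f x - f y - τ| ≤ 2 + τ := fun x y =>
    (abs_sub _ _).trans (by rw [abs_of_nonneg hτ0]; linarith [hdiff x y])
  have hΔ0 : 0 ≤ Δ := by linarith
  have hΔc : Δ ≤ 2 + τ := by linarith
  refine ⟨Δ / (4 * (2 + τ) ^ 2), ⟨by positivity, ?_⟩, ?_⟩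
  · rw [le_div_iff₀ (by positivity)]
    linarith [div_mul_le_quarter hΔ0 hΔc]
  filter_upwards [ae_sq_div_le_liminf_log_prod_div (V := fun i ω => (X i ω, Y i ω))
    ((hX 0).prodMk (hY 0)).aemeasurable hindep hident (ζ := fun p => f p.1 - f p.2 - τ)
    (by fun_prop) (fun p => hζc p.1 p.2) hmean hΔ0 hΔc] with ω hω
  refine le_trans ?_ hω
  have hc : (2 + τ) ^ 2 ≤ 96 := by nlinarith
  rw [div_le_div_iff₀ (by norm_num) (by positivity)]
  nlinarith [mul_le_mul_of_nonneg_left hc (sq_nonneg Δ)]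

/-- Growth of the abstract wealth process under the alternative: if
`m = ∫ f dP − ∫ f dQ > τ` with gap `Δ = m − τ`, then there is a bet size
`λ ∈ [0, 1/(8+4τ)]` for which `log K_t(λ)/t` has liminf at least `Δ²/768` almost
surely, i.e. the wealth grows exponentially at rate `Ω(Δ²)`. -/
theorem abstract_test_growth_under_alternative
    {Ω : Type*} [MeasurableSpace Ω] (μ : Measure Ω) [IsProbabilityMeasure μ]
    {𝒳 : Type*} [MeasurableSpace 𝒳]
    (X Y : ℕ → Ω → 𝒳) (hX : ∀ i, Measurable (X i)) (hY : ∀ i, Measurable (Y i))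
    (hindep : iIndepFun
      (fun i ω => (X i ω, Y i ω)) μ)
    (hident : ∀ i, IdentDistrib (fun ω => (X i ω, Y i ω))
      (fun ω => (X 0 ω, Y 0 ω)) μ μ)
    (P Q : Measure 𝒳)
    (hP : μ.map (X 0) = P) (hQ : μ.map (Y 0) = Q)
    (f : 𝒳 → ℝ) (hf : Measurable f) (hf1 : ∀ x, |f x| ≤ 1)
    (τ : ℝ) (hτ0 : 0 ≤ τ) (hτ2 : τ ≤ Real.sqrt 2)
    (m Δ : ℝ) (hm : m = (∫ x, f x ∂P) - ∫ x, f x ∂Q) (halt : τ < m)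
    (hΔ : Δ = m - τ) :
    ∃ lam : ℝ, lam ∈ Set.Icc 0 (1 / (8 + 4 * τ)) ∧
      ∀ᵐ ω ∂μ,
        Δ ^ 2 / 768 ≤
          liminf (fun t : ℕ =>
            Real.log (∏ i ∈ Finset.range t,
              (1 + lam * (f (X i ω) - f (Y i ω) - τ))) / t) atTop :=
  abstract_test_growth_under_alternative_general μ X Y hX hY hindep hident P Q hP hQ f hf hf1 τ hτ0
    m Δ hm halt hΔ
end

section
/- Let τ ∈ [0, √2], let t ≥ 1, let z₁, …, z_t be real numbers with zᵢ ∈ [−2−τ, 2−τ] for each i, let Δ > 0, and suppose ∑_{i=1}^{t} zᵢ ≥ tΔ/2. Set S = ∑_{i=1}^{t} zᵢ and Q = ∑_{i=1}^{t} zᵢ², and define λ* = S / ((8+4τ)·S + 2·Q). Then λ* ∈ [0, 1/(8+4τ)] and ∑_{i=1}^{t} log(1 + λ*·zᵢ) ≥ t·Δ²/768. -/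
/-!
Since `log (1 + x) ≥ x - (4/3) x²` for `x ≥ -1/4`, and the bet `λ* ≤ 1/(8+4τ)` keeps every
`λ* zᵢ` above `-1/4`, the log-wealth is at least `λ* S - (4/3) λ*² Q`. The bet is chosen so that
`2 λ* Q ≤ S`, which makes this at least `λ* S / 3 = S² / (3 ((8+4τ) S + 2 Q))`. Finally the
denominator is at most `64 t` (this is where `τ ≤ √2 ≤ 2` enters) while `S ≥ tΔ/2`.
-/

open Finset Real

lemma sub_sq_div_le_log_one_add {x c : ℝ} (hc : c < 1) (hx : -c ≤ x) :
    x - x ^ 2 / (1 - c) ≤ log (1 + x) := by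
  have hpos : 0 < 1 + x := by linarith
  calc x - x ^ 2 / (1 - c) ≤ x - x ^ 2 / (1 + x) := by
        gcongr; linarith
    _ = 1 - (1 + x)⁻¹ := by field_simp; ring
    _ ≤ log (1 + x) := one_sub_inv_le_log_of_pos hpos

lemma mul_sum_sub_sq_mul_sum_sq_div_le_sum_log {ι : Type*} (s : Finset ι) (z : ι → ℝ)
    {l c : ℝ} (hc : c < 1) (hz : ∀ i ∈ s, -c ≤ l * z i) :
    l * ∑ i ∈ s, z i - l ^ 2 * (∑ i ∈ s, z i ^ 2) / (1 - c) ≤ ∑ i ∈ s, log (1 + l * z i) := by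
  calc l * ∑ i ∈ s, z i - l ^ 2 * (∑ i ∈ s, z i ^ 2) / (1 - c)
      = ∑ i ∈ s, (l * z i - (l * z i) ^ 2 / (1 - c)) := by
        rw [sum_sub_distrib, mul_sum, mul_sum, sum_div]
        exact congrArg₂ _ rfl (sum_congr rfl fun i _ => by ring)
    _ ≤ ∑ i ∈ s, log (1 + l * z i) :=
        sum_le_sum fun i hi => sub_sq_div_le_log_one_add hc (hz i hi)

section Bet

variable {a S Q : ℝ}

lemma div_mul_add_two_mul_mem_Icc (ha : 0 < a) (hS : 0 < S) (hQ : 0 ≤ Q) :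
    S / (a * S + 2 * Q) ∈ Set.Icc 0 (1 / a) := by
  refine ⟨by positivity, ?_⟩
  calc S / (a * S + 2 * Q) ≤ S / (a * S) := by
        gcongr
        linarith
    _ = 1 / a := by field_simp

lemma sq_div_le_mul_sub_sq_mul (ha : 0 < a) (hS : 0 < S) (hQ : 0 ≤ Q) :
    S ^ 2 / (3 * (a * S + 2 * Q)) ≤
      S / (a * S + 2 * Q) * S - (S / (a * S + 2 * Q)) ^ 2 * Q / (1 - 1 / 4) := by
  set l := S / (a * S + 2 * Q)
  have hD : 0 < a * S + 2 * Q := by positivity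
  have hl : l * (a * S + 2 * Q) = S := div_mul_cancel₀ _ hD.ne'
  have hl0 : 0 ≤ l := by positivity
  have hlQ : 2 * l * Q ≤ S := by linarith [mul_nonneg (mul_nonneg hl0 ha.le) hS.le]
  have hlS : l * S = S ^ 2 / (a * S + 2 * Q) := by
    rw [div_mul_eq_mul_div, sq]
  calc S ^ 2 / (3 * (a * S + 2 * Q)) = l * S / 3 := by
        rw [hlS]; field_simp
    _ = l * S - 2 / 3 * (l * S) := by ring
    _ ≤ l * S - 2 / 3 * (l * (2 * l * Q)) := by gcongr
    _ = l * S - l ^ 2 * Q / (1 - 1 / 4) := by ring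

lemma sq_div_le_sum_log_one_add_div_mul {ι : Type*} (s : Finset ι) (z : ι → ℝ) {b : ℝ}
    (ha : 0 < a) (hab : 4 * b ≤ a) (hz : ∀ i ∈ s, |z i| ≤ b) (hS : 0 < ∑ i ∈ s, z i) :
    (∑ i ∈ s, z i) ^ 2 / (3 * (a * ∑ i ∈ s, z i + 2 * ∑ i ∈ s, z i ^ 2)) ≤
      ∑ i ∈ s, log (1 + (∑ i ∈ s, z i) / (a * ∑ i ∈ s, z i + 2 * ∑ i ∈ s, z i ^ 2) * z i) := by
  have hQ : 0 ≤ ∑ i ∈ s, z i ^ 2 := by positivity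
  have hl := div_mul_add_two_mul_mem_Icc ha hS hQ
  set l := (∑ i ∈ s, z i) / (a * ∑ i ∈ s, z i + 2 * ∑ i ∈ s, z i ^ 2)
  have hbet : ∀ i ∈ s, -(1 / 4) ≤ l * z i := fun i hi => by
    have : |l * z i| ≤ 1 / a * b := by
      rw [abs_mul, abs_of_nonneg hl.1]
      exact mul_le_mul hl.2 (hz i hi) (abs_nonneg _) (by positivity)
    have : 1 / a * b ≤ 1 / 4 := by
      rw [one_div_mul_eq_div, div_le_iff₀ ha]
      linarith
    linarith [neg_abs_le (l * z i)]
  exact (sq_div_le_mul_sub_sq_mul ha hS hQ).trans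
    (mul_sum_sub_sq_mul_sum_sq_div_le_sum_log s z (by norm_num) hbet)

end Bet

/-- Deterministic growth lemma at the data-dependent bet `λ* = S/((8+4τ)S + 2Q)`:
if `τ ∈ [0, √2]`, `zᵢ ∈ [−2−τ, 2−τ]` and `∑ zᵢ ≥ tΔ/2` with `Δ > 0`, then
`λ* ∈ [0, 1/(8+4τ)]` and `∑ log(1 + λ* zᵢ) ≥ tΔ²/768`. -/
theorem log_wealth_growth_at_lambda_star
    (τ : ℝ) (hτ0 : 0 ≤ τ) (hτ2 : τ ≤ Real.sqrt 2)
    (t : ℕ) (ht : 1 ≤ t)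
    (z : ℕ → ℝ) (hz : ∀ i ∈ Finset.Icc 1 t, z i ∈ Set.Icc (-2 - τ) (2 - τ))
    (Δ : ℝ) (hΔ : 0 < Δ)
    (hsum : (t : ℝ) * Δ / 2 ≤ ∑ i ∈ Finset.Icc 1 t, z i)
    (S Q lamStar : ℝ)
    (hS : S = ∑ i ∈ Finset.Icc 1 t, z i)
    (hQ : Q = ∑ i ∈ Finset.Icc 1 t, (z i) ^ 2)
    (hlam : lamStar = S / ((8 + 4 * τ) * S + 2 * Q)) :
    lamStar ∈ Set.Icc 0 (1 / (8 + 4 * τ)) ∧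
      (t : ℝ) * Δ ^ 2 / 768 ≤ ∑ i ∈ Finset.Icc 1 t, Real.log (1 + lamStar * z i) := by
  have hτ : τ ≤ 2 := hτ2.trans ((sqrt_le_left zero_le_two).2 (by norm_num))
  have habs : ∀ i ∈ Icc 1 t, |z i| ≤ 2 + τ := fun i hi =>
    abs_le.2 ⟨by linarith [(hz i hi).1], by linarith [(hz i hi).2]⟩
  have hS0 : 0 < S := by
    have : (1 : ℝ) ≤ t := by exact_mod_cast ht
    rw [hS]; nlinarith
  have hQ0 : 0 ≤ Q := by rw [hQ]; positivity
  have hcard : (#(Icc 1 t) : ℝ) = t := by simp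
  have hSle : S ≤ t * 2 := by
    rw [hS, ← hcard, ← nsmul_eq_mul]
    exact sum_le_card_nsmul _ _ _ fun i hi => by linarith [(hz i hi).2]
  have hQle : Q ≤ t * (2 + τ) ^ 2 := by
    rw [hQ, ← hcard, ← nsmul_eq_mul]
    exact sum_le_card_nsmul _ _ _ fun i hi => sq_le_sq.2 ((habs i hi).trans (le_abs_self _))
  have hD : (8 + 4 * τ) * S + 2 * Q ≤ 64 * t := by
    nlinarith [mul_le_mul_of_nonneg_left hSle (by linarith : (0 : ℝ) ≤ 8 + 4 * τ),
      mul_nonneg (mul_nonneg (sub_nonneg.2 hτ) (by linarith : (0 : ℝ) ≤ τ + 10)) t.cast_nonneg]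
  refine ⟨hlam ▸ div_mul_add_two_mul_mem_Icc (by linarith) hS0 hQ0, ?_⟩
  calc (t : ℝ) * Δ ^ 2 / 768 ≤ S ^ 2 / (3 * ((8 + 4 * τ) * S + 2 * Q)) := by
        rw [div_le_div_iff₀ (by norm_num) (by positivity)]
        nlinarith [mul_le_mul_of_nonneg_left hD (by positivity : (0 : ℝ) ≤ t * Δ ^ 2),
          mul_self_le_mul_self (by positivity) (hS ▸ hsum)]
    _ ≤ ∑ i ∈ Icc 1 t, log (1 + lamStar * z i) := by
        rw [hlam, hS, hQ]
        exact sq_div_le_sum_log_one_add_div_mul _ _ (by linarith) (by linarith) habs (hS ▸ hS0)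
end

section
/- Let 𝒳 be a measurable space, P and Q probability measures on 𝒳, f : 𝒳 → ℝ measurable with |f(x)| ≤ 1 for all x, and τ ≥ 0 with ∫ f dP − ∫ f dQ ≤ τ. Let X and Y be independent random variables with laws P and Q respectively. Then the random variable E := (2 + f(X) − f(Y)) / (2 + τ) satisfies E ≥ 0 almost surely and 𝔼[E] ≤ 1; that is, E is an e-value for the null hypothesis. -/
open MeasureTheory ProbabilityTheory

/-- Under the null hypothesis `∫ f dP − ∫ f dQ ≤ τ`, the random variable
`E = (2 + f(X) − f(Y))/(2 + τ)` is an e-value: it is nonnegative almost surely and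
has expectation at most `1`. -/
theorem e_value_for_null
    {Ω : Type*} [MeasurableSpace Ω] (μ : Measure Ω) [IsProbabilityMeasure μ]
    {𝒳 : Type*} [MeasurableSpace 𝒳]
    (P Q : Measure 𝒳) [IsProbabilityMeasure P] [IsProbabilityMeasure Q]
    (f : 𝒳 → ℝ) (hf : Measurable f) (hf1 : ∀ x, |f x| ≤ 1)
    (τ : ℝ) (hτ : 0 ≤ τ) (hnull : (∫ x, f x ∂P) - ∫ x, f x ∂Q ≤ τ)
    (X Y : Ω → 𝒳) (hX : Measurable X) (hY : Measurable Y)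
    (hindep : IndepFun X Y μ)
    (hPX : μ.map X = P) (hQY : μ.map Y = Q) :
    (∀ᵐ ω ∂μ, 0 ≤ (2 + f (X ω) - f (Y ω)) / (2 + τ)) ∧
      (∫ ω, (2 + f (X ω) - f (Y ω)) / (2 + τ) ∂μ) ≤ 1 := by
  have hden : (0:ℝ) < 2 + τ := by linarith
  constructor
  · filter_upwards with ω
    have h1 := abs_le.1 (hf1 (X ω))
    have h2 := abs_le.1 (hf1 (Y ω))
    apply div_nonneg _ hden.le
    linarith
  · have hiX : Integrable (fun ω => f (X ω)) μ := by
      have : Integrable f (μ.map X) := by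
        rw [hPX]
        exact (integrable_const (1:ℝ)).mono' (hf.aestronglyMeasurable)
          (Filter.Eventually.of_forall (by simpa using hf1))
      exact (integrable_map_measure hf.aestronglyMeasurable hX.aemeasurable).mp this
    have hiY : Integrable (fun ω => f (Y ω)) μ := by
      have : Integrable f (μ.map Y) := by
        rw [hQY]
        exact (integrable_const (1:ℝ)).mono' (hf.aestronglyMeasurable)
          (Filter.Eventually.of_forall (by simpa using hf1))
      exact (integrable_map_measure hf.aestronglyMeasurable hY.aemeasurable).mp this
    have hEX : (∫ ω, f (X ω) ∂μ) = ∫ x, f x ∂P := by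
      rw [← hPX, integral_map hX.aemeasurable hf.aestronglyMeasurable]
    have hEY : (∫ ω, f (Y ω) ∂μ) = ∫ x, f x ∂Q := by
      rw [← hQY, integral_map hY.aemeasurable hf.aestronglyMeasurable]
    have key : (∫ ω, (2 + f (X ω) - f (Y ω)) ∂μ)
        = 2 + (∫ x, f x ∂P) - ∫ x, f x ∂Q := by
      have h1 : (∫ ω, (2 + f (X ω) - f (Y ω)) ∂μ)
          = (∫ ω, (2 + f (X ω)) ∂μ) - ∫ ω, f (Y ω) ∂μ :=
        integral_sub ((integrable_const (2:ℝ)).add hiX) hiY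
      have h2 : (∫ ω, (2 + f (X ω)) ∂μ)
          = (∫ _ω, (2:ℝ) ∂μ) + ∫ ω, f (X ω) ∂μ :=
        integral_add (integrable_const (2:ℝ)) hiX
      rw [h1, h2, integral_const]
      simp [hEX, hEY]
    rw [integral_div, key, div_le_one hden]
    linarith
end
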